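/- Let T be a contraction on a Hilbert space H, and suppose K is a closed subspace of H reducing T on which T restricts to a unitary. Then K is contained in H_0 = {h ∈ H : ‖T^n h‖ = ‖h‖ = ‖(T*)^n h‖ for all n ≥ 1}. Thus H_0 is the maximal reducing subspace on which T is unitary. -/
import Mathlib


open ContinuousLinearMap Filter
open scoped InnerProductSpace

noncomputable section

theorem unitary_part_maximal
    {H : Type*} [NormedAddCommGroup H] [InnerProductSpace ℂ H] [CompleteSpace H]
    (T : H →L[ℂ] H) (hT : ‖T‖ ≤ 1)
    (K : Submodule ℂ H) (hKclosed : IsClosed (K : Set H))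
    (hKinv : ∀ h ∈ K, T h ∈ K) (hKinv' : ∀ h ∈ K, adjoint T h ∈ K)
    (hiso : ∀ h ∈ K, ‖T h‖ = ‖h‖)
    (hsurj : ∀ h ∈ K, ∃ g ∈ K, T g = h) :
    (K : Set H) ⊆ {h : H | ∀ n : ℕ, 1 ≤ n →
        ‖(T ^ n) h‖ = ‖h‖ ∧ ‖((adjoint T) ^ n) h‖ = ‖h‖} := by
  have hadjnorm : ‖adjoint T‖ ≤ 1 := by
    rw [LinearIsometryEquiv.norm_map adjoint T]; exact hT
  -- T*T = id on K
  have hTT : ∀ g ∈ K, adjoint T (T g) = g := by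
    intro g hg
    have h1 : ‖T g‖ = ‖g‖ := hiso g hg
    have h2 : ‖adjoint T (T g)‖ ≤ ‖g‖ := by
      calc ‖adjoint T (T g)‖ ≤ ‖adjoint T‖ * ‖T g‖ := le_opNorm _ _
        _ ≤ 1 * ‖g‖ := by rw [h1]; exact mul_le_mul_of_nonneg_right hadjnorm (norm_nonneg _)
        _ = ‖g‖ := one_mul _
    have hre : RCLike.re (⟪adjoint T (T g), g⟫_ℂ) = ‖g‖ ^ 2 := by
      rw [adjoint_inner_left]
      rw [@inner_self_eq_norm_sq ℂ, h1]
    have hsq : ‖adjoint T (T g) - g‖ ^ 2 ≤ 0 := by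
      rw [@norm_sub_sq ℂ, hre]
      nlinarith [norm_nonneg (adjoint T (T g)), norm_nonneg g]
    have : ‖adjoint T (T g) - g‖ = 0 := by
      nlinarith [norm_nonneg (adjoint T (T g) - g)]
    rwa [norm_eq_zero, sub_eq_zero] at this
  -- adjoint T is isometric on K
  have hiso' : ∀ h ∈ K, ‖adjoint T h‖ = ‖h‖ := by
    intro h hK
    obtain ⟨g, hg, hTg⟩ := hsurj h hK
    rw [← hTg, hTT g hg, hiso g hg]
  intro h hK
  have main : ∀ n : ℕ, ((T ^ n) h ∈ K ∧ ‖(T ^ n) h‖ = ‖h‖)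
      ∧ (((adjoint T) ^ n) h ∈ K ∧ ‖((adjoint T) ^ n) h‖ = ‖h‖) := by
    intro n
    induction n with
    | zero => simpa using hK
    | succ n ih =>
      obtain ⟨⟨hm, hn⟩, ⟨hm', hn'⟩⟩ := ih
      have e1 : (T ^ (n + 1)) h = T ((T ^ n) h) := by
        rw [pow_succ']; rfl
      have e2 : ((adjoint T) ^ (n + 1)) h = adjoint T (((adjoint T) ^ n) h) := by
        rw [pow_succ']; rfl
      refine ⟨⟨?_, ?_⟩, ?_, ?_⟩
      · rw [e1]; exact hKinv _ hm
      · rw [e1, hiso _ hm, hn]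
      · rw [e2]; exact hKinv' _ hm'
      · rw [e2, hiso' _ hm', hn']
  intro n _
  exact ⟨(main n).1.2, (main n).2.2⟩
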